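/- arXiv:1306.5334 — 5 statements merged into one kernel-verified Lean document; each statement's English description precedes it below -/
import Mathlib

section
/- Let d ≥ 1 and p > 0. For f : ℤ^d → ℝ define the seminorm [f]_p := sup_{ℓ ∈ ℤ^d \ {0}} (|ℓ|_∞ − 1/2)^p |f(ℓ)|, and define the coarsened function f⁺(ℓ) := ∑_{λ ∈ ℤ^d, |λ − 3ℓ|_∞ ≤ 1} f(λ). If [f]_p < ∞, then [f⁺]_p ≤ 3^{d−p} [f]_p. -/
/-!
Every lattice point `k` entering the sum `f⁺(ℓ)` satisfies `|k|_∞ ≥ 3|ℓ|_∞ - 1`, hence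
`|k|_∞ - 1/2 ≥ 3 (|ℓ|_∞ - 1/2)`. So each of the `3^d` terms is bounded by `3^{-p} [f]_p` after
multiplication by `(|ℓ|_∞ - 1/2)^p`, and summing gives `3^{d-p} [f]_p`.
-/

/-- The maximum (ℓ^∞) norm of a lattice point `ℓ ∈ ℤ^d`, as a real number. -/
noncomputable def supnorm {d : ℕ} (ℓ : Fin d → ℤ) : ℝ :=
  ((Finset.univ.sup fun i => (ℓ i).natAbs : ℕ) : ℝ)

/-- The coarsened function `f⁺(ℓ) = ∑_{|λ − 3ℓ|_∞ ≤ 1} f(λ)`. -/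
noncomputable def coarsen {d : ℕ} (f : (Fin d → ℤ) → ℝ) (ℓ : Fin d → ℤ) : ℝ :=
  ∑ μ ∈ Fintype.piFinset (fun _ : Fin d => ({-1, 0, 1} : Finset ℤ)),
    f (fun i => 3 * ℓ i + μ i)

open Finset

section supnorm

variable {d : ℕ}

lemma natAbs_le_supnorm (ℓ : Fin d → ℤ) (i : Fin d) : ((ℓ i).natAbs : ℝ) ≤ supnorm ℓ :=
  Nat.cast_le.mpr (le_sup (f := fun i => (ℓ i).natAbs) (mem_univ i))

lemma one_le_supnorm {ℓ : Fin d → ℤ} (hℓ : ℓ ≠ 0) : 1 ≤ supnorm ℓ := by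
  obtain ⟨i, hi⟩ := Function.ne_iff.mp hℓ
  exact le_trans (by exact_mod_cast Int.natAbs_pos.mpr hi) (natAbs_le_supnorm ℓ i)

lemma ne_zero_of_supnorm_pos {ℓ : Fin d → ℤ} (h : 0 < supnorm ℓ) : ℓ ≠ 0 := by
  rintro rfl
  simp [supnorm] at h

lemma exists_natAbs_eq_supnorm [Nonempty (Fin d)] (ℓ : Fin d → ℤ) :
    ∃ i, ((ℓ i).natAbs : ℝ) = supnorm ℓ := by
  obtain ⟨i, -, hi⟩ := exists_mem_eq_sup univ univ_nonempty fun i => (ℓ i).natAbs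
  exact ⟨i, by simp [supnorm, hi]⟩

lemma three_mul_supnorm_sub_one_le (ℓ μ : Fin d → ℤ) (hμ : ∀ i, (μ i).natAbs ≤ 1) :
    3 * supnorm ℓ - 1 ≤ supnorm (fun i => 3 * ℓ i + μ i) := by
  cases isEmpty_or_nonempty (Fin d)
  · simp [supnorm, univ_eq_empty]
  · obtain ⟨i, hi⟩ := exists_natAbs_eq_supnorm ℓ
    have hcoord : 3 * (ℓ i).natAbs ≤ (3 * ℓ i + μ i).natAbs + 1 := by
      have := hμ i
      omega
    have hcoord' : 3 * ((ℓ i).natAbs : ℝ) ≤ (3 * ℓ i + μ i).natAbs + 1 := by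
      exact_mod_cast hcoord
    linarith [natAbs_le_supnorm (fun j => 3 * ℓ j + μ j) i]

end supnorm

section coarsen

variable {d : ℕ} {p : ℝ} {f : (Fin d → ℤ) → ℝ} {M : ℝ}

lemma natAbs_le_one_of_mem_piFinset {μ : Fin d → ℤ}
    (hμ : μ ∈ Fintype.piFinset fun _ : Fin d => ({-1, 0, 1} : Finset ℤ)) (i : Fin d) :
    (μ i).natAbs ≤ 1 := by
  have := Fintype.mem_piFinset.mp hμ i
  simp only [mem_insert, mem_singleton] at this
  omega

lemma rpow_mul_abs_shift_le (hp : 0 ≤ p)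
    (hM : ∀ k : Fin d → ℤ, k ≠ 0 → (supnorm k - 1 / 2) ^ p * |f k| ≤ M)
    {ℓ μ : Fin d → ℤ} (hℓ : ℓ ≠ 0) (hμ : ∀ i, (μ i).natAbs ≤ 1) :
    (supnorm ℓ - 1 / 2) ^ p * |f (fun i => 3 * ℓ i + μ i)| ≤ 3 ^ (-p) * M := by
  set k : Fin d → ℤ := fun i => 3 * ℓ i + μ i
  have hℓ1 := one_le_supnorm hℓ
  have hk : 3 * (supnorm ℓ - 1 / 2) ≤ supnorm k - 1 / 2 := by
    linarith [three_mul_supnorm_sub_one_le ℓ μ hμ]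
  have hk0 : k ≠ 0 := ne_zero_of_supnorm_pos (by linarith)
  have h3p : (0 : ℝ) < 3 ^ p := by positivity
  rw [Real.rpow_neg (by norm_num), inv_mul_eq_div, le_div_iff₀ h3p]
  calc (supnorm ℓ - 1 / 2) ^ p * |f k| * 3 ^ p
      = (3 * (supnorm ℓ - 1 / 2)) ^ p * |f k| := by
        rw [Real.mul_rpow (by norm_num) (by linarith)]
        ring
    _ ≤ (supnorm k - 1 / 2) ^ p * |f k| := by
        gcongr
        linarith
    _ ≤ M := hM k hk0

lemma rpow_mul_abs_coarsen_le (hp : 0 ≤ p)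
    (hM : ∀ k : Fin d → ℤ, k ≠ 0 → (supnorm k - 1 / 2) ^ p * |f k| ≤ M)
    {ℓ : Fin d → ℤ} (hℓ : ℓ ≠ 0) :
    (supnorm ℓ - 1 / 2) ^ p * |coarsen f ℓ| ≤ 3 ^ ((d : ℝ) - p) * M := by
  set T := Fintype.piFinset fun _ : Fin d => ({-1, 0, 1} : Finset ℤ)
  have hcard : (#T : ℝ) = 3 ^ (d : ℝ) := by
    simp [T, Fintype.card_piFinset]
  have hw : 0 ≤ (supnorm ℓ - 1 / 2) ^ p :=
    Real.rpow_nonneg (by linarith [one_le_supnorm hℓ]) p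
  calc (supnorm ℓ - 1 / 2) ^ p * |coarsen f ℓ|
      ≤ (supnorm ℓ - 1 / 2) ^ p * ∑ μ ∈ T, |f (fun i => 3 * ℓ i + μ i)| :=
        mul_le_mul_of_nonneg_left (abs_sum_le_sum_abs _ _) hw
    _ = ∑ μ ∈ T, (supnorm ℓ - 1 / 2) ^ p * |f (fun i => 3 * ℓ i + μ i)| := mul_sum _ _ _
    _ ≤ ∑ _μ ∈ T, 3 ^ (-p) * M := sum_le_sum fun μ hμ =>
        rpow_mul_abs_shift_le hp hM hℓ (natAbs_le_one_of_mem_piFinset hμ)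
    _ = 3 ^ ((d : ℝ) - p) * M := by
        rw [sum_const, nsmul_eq_mul, hcard, ← mul_assoc,
          ← Real.rpow_add (by norm_num), ← sub_eq_add_neg]

end coarsen

theorem stmt2_general (d : ℕ) (p : ℝ) (hp : 0 < p) (f : (Fin d → ℤ) → ℝ)
    (hb : BddAbove {x : ℝ | ∃ ℓ : Fin d → ℤ, ℓ ≠ 0 ∧ x = (supnorm ℓ - 1 / 2) ^ p * |f ℓ|}) :
    sSup {x : ℝ | ∃ ℓ : Fin d → ℤ, ℓ ≠ 0 ∧ x = (supnorm ℓ - 1 / 2) ^ p * |coarsen f ℓ|}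
      ≤ 3 ^ ((d : ℝ) - p) *
        sSup {x : ℝ | ∃ ℓ : Fin d → ℤ, ℓ ≠ 0 ∧ x = (supnorm ℓ - 1 / 2) ^ p * |f ℓ|} := by
  have hseminorm_nonneg :
      0 ≤ sSup {x : ℝ | ∃ ℓ : Fin d → ℤ, ℓ ≠ 0 ∧ x = (supnorm ℓ - 1 / 2) ^ p * |f ℓ|} := by
    refine Real.sSup_nonneg ?_
    rintro _ ⟨ℓ, hℓ, rfl⟩
    exact mul_nonneg (Real.rpow_nonneg (by linarith [one_le_supnorm hℓ]) p) (abs_nonneg _)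
  refine Real.sSup_le ?_ (mul_nonneg (by positivity) hseminorm_nonneg)
  rintro _ ⟨ℓ, hℓ, rfl⟩
  exact rpow_mul_abs_coarsen_le hp.le (fun k hk => le_csSup hb ⟨k, hk, rfl⟩) hℓ

/-- **Contraction of the decay seminorm under coarsening**: with
`[f]_p := sup_{ℓ ≠ 0} (|ℓ|_∞ − 1/2)^p |f(ℓ)|` (finite by assumption, i.e. the defining set
is bounded above), one has `[f⁺]_p ≤ 3^{d−p} [f]_p`. -/
theorem stmt2 (d : ℕ) (hd : 1 ≤ d) (p : ℝ) (hp : 0 < p) (f : (Fin d → ℤ) → ℝ)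
    (hb : BddAbove {x : ℝ | ∃ ℓ : Fin d → ℤ, ℓ ≠ 0 ∧ x = (supnorm ℓ - 1 / 2) ^ p * |f ℓ|}) :
    sSup {x : ℝ | ∃ ℓ : Fin d → ℤ, ℓ ≠ 0 ∧ x = (supnorm ℓ - 1 / 2) ^ p * |coarsen f ℓ|}
      ≤ 3 ^ ((d : ℝ) - p) *
        sSup {x : ℝ | ∃ ℓ : Fin d → ℤ, ℓ ≠ 0 ∧ x = (supnorm ℓ - 1 / 2) ^ p * |f ℓ|} :=
  stmt2_general d p hp f hb
end

section
/- Let d ≥ 1 and p > d be real. There exists a constant C > 0, depending only on d and p, such that for all r > 0 and all ℓ ∈ ℤ^d with |ℓ| ≥ 2r, one has ∑_{k ∈ ℤ^d} (1 + |k|)^{-d} (1 + |ℓ − k|)^{-p} ≤ C (1 + r)^{-d}. -/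
/-!
Write `a = 1 + |k|`, `b = 1 + |ℓ - k|` and `M = 1 + |ℓ|/2`. By the triangle inequality
`a + b ≥ 2M`. If `a ≥ M` then `a⁻ᵈ b⁻ᵖ ≤ M⁻ᵈ b⁻ᵖ`; otherwise `a < M ≤ b` and
`a⁻ᵈ b⁻ᵖ = a⁻ᵖ aᵖ⁻ᵈ b⁻ᵖ ≤ a⁻ᵖ Mᵖ⁻ᵈ M⁻ᵖ = M⁻ᵈ a⁻ᵖ`. Hence each term is at most
`M⁻ᵈ (a⁻ᵖ + b⁻ᵖ)`, and summing over `k` gives `2 S M⁻ᵈ ≤ 2 S (1 + r)⁻ᵈ` with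
`S = ∑ (1 + |k|)⁻ᵖ`, which is finite because `p > d`.
-/

/-- The Euclidean norm of a lattice point `ℓ ∈ ℤ^d`. -/
noncomputable def znorm {d : ℕ} (ℓ : Fin d → ℤ) : ℝ :=
  Real.sqrt (∑ i, ((ℓ i : ℝ)) ^ 2)

open Module Submodule

lemma Real.rpow_neg_mul_rpow_neg_le {a b M d p : ℝ} (ha : 0 < a) (hb : 0 < b) (hM : 0 < M)
    (hd : 0 ≤ d) (hdp : d ≤ p) (hab : 2 * M ≤ a + b) :
    a ^ (-d) * b ^ (-p) ≤ M ^ (-d) * (a ^ (-p) + b ^ (-p)) := by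
  have hMd : 0 ≤ M ^ (-d) := by positivity
  rcases le_or_gt M a with haM | haM
  · calc a ^ (-d) * b ^ (-p) ≤ M ^ (-d) * b ^ (-p) :=
          mul_le_mul_of_nonneg_right (rpow_le_rpow_of_nonpos hM haM (by linarith)) (by positivity)
      _ ≤ M ^ (-d) * (a ^ (-p) + b ^ (-p)) :=
          mul_le_mul_of_nonneg_left (le_add_of_nonneg_left (by positivity)) hMd
  · have hbM : M ≤ b := by linarith
    calc a ^ (-d) * b ^ (-p) = a ^ (p - d) * b ^ (-p) * a ^ (-p) := by
          rw [mul_right_comm, ← rpow_add ha]; ring_nf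
      _ ≤ M ^ (p - d) * M ^ (-p) * a ^ (-p) := by
          refine mul_le_mul_of_nonneg_right (mul_le_mul ?_ ?_ (by positivity) (by positivity))
            (by positivity)
          · exact rpow_le_rpow ha.le haM.le (by linarith)
          · exact rpow_le_rpow_of_nonpos hM hbM (by linarith)
      _ = M ^ (-d) * a ^ (-p) := by rw [← rpow_add hM]; ring_nf
      _ ≤ M ^ (-d) * (a ^ (-p) + b ^ (-p)) :=
          mul_le_mul_of_nonneg_left (le_add_of_nonneg_right (by positivity)) hMd

lemma ZLattice.summable_one_add_norm_rpow {E : Type*} [NormedAddCommGroup E] [NormedSpace ℝ E]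
    [FiniteDimensional ℝ E] (L : Submodule ℤ E) [DiscreteTopology L] {s : ℝ}
    (hs : finrank ℤ L < s) : Summable fun z : L => (1 + ‖z‖) ^ (-s) := by
  refine (summable_norm_rpow L (-s) (by linarith)).of_norm_bounded_eventually ?_
  refine (Set.finite_singleton 0).subset fun z hz => ?_
  by_contra hz0
  have hz_pos : 0 < ‖z‖ := norm_pos_iff.mpr hz0
  refine hz ?_
  show ‖(1 + ‖z‖) ^ (-s)‖ ≤ ‖z‖ ^ (-s)
  rw [Real.norm_of_nonneg (by positivity)]
  exact Real.rpow_le_rpow_of_nonpos hz_pos (by linarith)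
    (by linarith [(finrank ℤ L).cast_nonneg (α := ℝ)])

lemma znorm_eq_norm {d : ℕ} (k : Fin d → ℤ) :
    znorm k = ‖WithLp.toLp 2 (fun i => (k i : ℝ))‖ := by
  simp [znorm, EuclideanSpace.norm_eq]

lemma znorm_nonneg {d : ℕ} (k : Fin d → ℤ) : 0 ≤ znorm k :=
  Real.sqrt_nonneg _

lemma one_add_znorm_pos {d : ℕ} (k : Fin d → ℤ) : 0 < 1 + znorm k := by
  linarith [znorm_nonneg k]

lemma znorm_add_le {d : ℕ} (k l : Fin d → ℤ) : znorm (k + l) ≤ znorm k + znorm l := by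
  simp only [znorm_eq_norm, Pi.add_apply, Int.cast_add]
  exact norm_add_le (WithLp.toLp 2 fun i => (k i : ℝ)) (WithLp.toLp 2 fun i => (l i : ℝ))

/-- `ℤ^d` is the lattice spanned over `ℤ` by the standard basis of `EuclideanSpace ℝ (Fin d)`. -/
lemma summable_one_add_znorm_rpow {d : ℕ} {s : ℝ} (hs : (d : ℝ) < s) :
    Summable fun k : Fin d → ℤ => (1 + znorm k) ^ (-s) := by
  let b := (EuclideanSpace.basisFun (Fin d) ℝ).toBasis
  let e := (b.restrictScalars ℤ).equivFun.symm
  have he (k : Fin d → ℤ) :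
      (e k : EuclideanSpace ℝ (Fin d)) = WithLp.toLp 2 fun i => (k i : ℝ) := by
    simp only [e, Basis.equivFun_symm_apply, coe_sum, coe_smul_of_tower,
      Basis.restrictScalars_apply]
    ext i
    simp [b, Pi.single_apply]
  have hrank : finrank ℤ (span ℤ (Set.range b)) = d := by
    rw [finrank_eq_card_basis (b.restrictScalars ℤ), Fintype.card_fin]
  have hL := ZLattice.summable_one_add_norm_rpow (span ℤ (Set.range b)) (s := s)
    (by rw [hrank]; exact hs)
  rw [← e.toEquiv.summable_iff] at hL
  refine hL.congr fun k => ?_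
  simp only [Function.comp_apply, LinearEquiv.coe_toEquiv, coe_norm, he, znorm_eq_norm]

lemma tsum_one_add_znorm_rpow_mul_le {d : ℕ} {s t : ℝ} (hs : 0 ≤ s) (hst : s ≤ t)
    (ht : (d : ℝ) < t) (ℓ : Fin d → ℤ) :
    ∑' k : Fin d → ℤ, (1 + znorm k) ^ (-s) * (1 + znorm (ℓ - k)) ^ (-t)
      ≤ 2 * (∑' k : Fin d → ℤ, (1 + znorm k) ^ (-t)) * (1 + znorm ℓ / 2) ^ (-s) := by
  have hg := summable_one_add_znorm_rpow ht
  have hg_reflect : Summable fun k : Fin d → ℤ => (1 + znorm (ℓ - k)) ^ (-t) :=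
    (Equiv.subLeft ℓ).summable_iff.mpr hg
  have hbound (k : Fin d → ℤ) : (1 + znorm k) ^ (-s) * (1 + znorm (ℓ - k)) ^ (-t)
      ≤ (1 + znorm ℓ / 2) ^ (-s) * ((1 + znorm k) ^ (-t) + (1 + znorm (ℓ - k)) ^ (-t)) := by
    have htri := znorm_add_le k (ℓ - k)
    rw [add_sub_cancel] at htri
    exact Real.rpow_neg_mul_rpow_neg_le (one_add_znorm_pos k) (one_add_znorm_pos (ℓ - k))
      (by linarith [znorm_nonneg ℓ]) hs hst (by linarith)
  have hdom : Summable fun k : Fin d → ℤ =>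
      (1 + znorm ℓ / 2) ^ (-s) * ((1 + znorm k) ^ (-t) + (1 + znorm (ℓ - k)) ^ (-t)) :=
    (hg.add hg_reflect).mul_left _
  have hterm_nonneg (k : Fin d → ℤ) : 0 ≤ (1 + znorm k) ^ (-s) * (1 + znorm (ℓ - k)) ^ (-t) :=
    mul_nonneg (Real.rpow_nonneg (one_add_znorm_pos k).le _)
      (Real.rpow_nonneg (one_add_znorm_pos (ℓ - k)).le _)
  have hreflect : ∑' k : Fin d → ℤ, (1 + znorm (ℓ - k)) ^ (-t)
      = ∑' k : Fin d → ℤ, (1 + znorm k) ^ (-t) :=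
    (Equiv.subLeft ℓ).tsum_eq fun k => (1 + znorm k) ^ (-t)
  calc ∑' k : Fin d → ℤ, (1 + znorm k) ^ (-s) * (1 + znorm (ℓ - k)) ^ (-t)
      ≤ ∑' k : Fin d → ℤ,
          (1 + znorm ℓ / 2) ^ (-s) * ((1 + znorm k) ^ (-t) + (1 + znorm (ℓ - k)) ^ (-t)) :=
        (hdom.of_nonneg_of_le hterm_nonneg hbound).tsum_le_tsum hbound hdom
    _ = 2 * (∑' k : Fin d → ℤ, (1 + znorm k) ^ (-t)) * (1 + znorm ℓ / 2) ^ (-s) := by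
        rw [tsum_mul_left, hg.tsum_add hg_reflect, hreflect]
        ring

theorem stmt3_general (d : ℕ) (p : ℝ) (hp : (d : ℝ) < p) :
    ∃ C : ℝ, 0 < C ∧ ∀ r : ℝ, 0 < r → ∀ ℓ : Fin d → ℤ, 2 * r ≤ znorm ℓ →
      (∑' k : Fin d → ℤ, (1 + znorm k) ^ (-(d : ℝ)) * (1 + znorm (ℓ - k)) ^ (-p))
        ≤ C * (1 + r) ^ (-(d : ℝ)) := by
  set S := ∑' k : Fin d → ℤ, (1 + znorm k) ^ (-p)
  have hd : (0 : ℝ) ≤ d := d.cast_nonneg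
  have hS : 0 < S := (summable_one_add_znorm_rpow hp).tsum_pos
    (fun k => Real.rpow_nonneg (one_add_znorm_pos k).le _) 0 (by simp [znorm])
  refine ⟨2 * S, by positivity, fun r hr ℓ hℓ => ?_⟩
  calc _ ≤ 2 * S * (1 + znorm ℓ / 2) ^ (-(d : ℝ)) :=
        tsum_one_add_znorm_rpow_mul_le hd hp.le hp ℓ
    _ ≤ 2 * S * (1 + r) ^ (-(d : ℝ)) := mul_le_mul_of_nonneg_left
        (Real.rpow_le_rpow_of_nonpos (by positivity) (by linarith) (by linarith)) (by positivity)

/-- **Discrete convolution estimate, case `p > d`**: there is `C > 0`, depending only on `d`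
and `p`, such that for all `r > 0` and all `ℓ ∈ ℤ^d` with `|ℓ| ≥ 2r`,
`∑_{k ∈ ℤ^d} (1+|k|)^{-d} (1+|ℓ−k|)^{-p} ≤ C (1+r)^{-d}`. -/
theorem stmt3 (d : ℕ) (hd : 1 ≤ d) (p : ℝ) (hp : (d : ℝ) < p) :
    ∃ C : ℝ, 0 < C ∧ ∀ r : ℝ, 0 < r → ∀ ℓ : Fin d → ℤ, 2 * r ≤ znorm ℓ →
      (∑' k : Fin d → ℤ, (1 + znorm k) ^ (-(d : ℝ)) * (1 + znorm (ℓ - k)) ^ (-p))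
        ≤ C * (1 + r) ^ (-(d : ℝ)) :=
  stmt3_general d p hp
end

section
/- Let C ≥ 0, let η : (0, ∞) → [0, ∞) satisfy η(r) → 0 as r → ∞, and let v : (0, ∞) → [0, ∞) be such that sup_{0 < r ≤ s} v(r) < ∞ for every s > 0, and v(2r) ≤ C (1 + η(r) v(r)) for all r > 0. Then v is bounded on (0, ∞). -/
/-- **Dyadic iteration argument**: if `v : (0,∞) → [0,∞)` is bounded on every interval
`(0, s]`, satisfies `v(2r) ≤ C (1 + η(r) v(r))` for all `r > 0` with `C ≥ 0` and
`η : (0,∞) → [0,∞)` tending to `0` at infinity, then `v` is bounded on `(0,∞)`. -/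
theorem stmt6 (C : ℝ) (hC : 0 ≤ C) (η v : ℝ → ℝ)
    (hη0 : ∀ r : ℝ, 0 < r → 0 ≤ η r)
    (hηlim : Filter.Tendsto η Filter.atTop (nhds 0))
    (hv0 : ∀ r : ℝ, 0 < r → 0 ≤ v r)
    (hloc : ∀ s : ℝ, 0 < s → BddAbove (v '' Set.Ioc 0 s))
    (hrec : ∀ r : ℝ, 0 < r → v (2 * r) ≤ C * (1 + η r * v r)) :
    ∃ M : ℝ, ∀ r : ℝ, 0 < r → v r ≤ M := by
  -- choose R ≥ 1 with η r ≤ 1/(2(C+1)) for r ≥ R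
  have hpos : (0:ℝ) < 1 / (2 * (C + 1)) := by positivity
  obtain ⟨R₀, hR₀⟩ := (Filter.tendsto_atTop'.mp hηlim) (Set.Iio (1 / (2 * (C + 1))))
    (Iio_mem_nhds hpos)
  set R : ℝ := max R₀ 1 with hRdef
  have hR1 : (1:ℝ) ≤ R := le_max_right _ _
  have hRpos : (0:ℝ) < R := lt_of_lt_of_le one_pos hR1
  have hηR : ∀ r : ℝ, R ≤ r → C * η r ≤ 1 / 2 := by
    intro r hr
    have h1 : η r < 1 / (2 * (C + 1)) := hR₀ r (le_trans (le_max_left _ _) hr)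
    have h0 : 0 ≤ η r := hη0 r (lt_of_lt_of_le hRpos hr)
    have hC1 : (0:ℝ) < C + 1 := by linarith
    calc C * η r ≤ (C + 1) * (1 / (2 * (C + 1))) := by
          apply mul_le_mul (by linarith) h1.le h0 (by linarith)
      _ = 1 / 2 := by field_simp
  -- M0 bounds v on (0, 2R]
  obtain ⟨M0, hM0⟩ := hloc (2 * R) (by linarith)
  have hM0' : ∀ r : ℝ, 0 < r → r ≤ 2 * R → v r ≤ M0 := fun r h1 h2 =>
    hM0 ⟨r, ⟨h1, h2⟩, rfl⟩
  have hM0nn : 0 ≤ M0 := le_trans (hv0 R hRpos) (hM0' R hRpos (by linarith))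
  -- induction over dyadic scales
  have key : ∀ n : ℕ, ∀ r : ℝ, 0 < r → r ≤ 2 ^ n * (2 * R) → v r ≤ 2 * C + M0 := by
    intro n
    induction n with
    | zero => intro r h1 h2; simp at h2; linarith [hM0' r h1 h2]
    | succ n ih =>
      intro r h1 h2
      by_cases hsmall : r ≤ 2 * R
      · linarith [hM0' r h1 hsmall]
      · push_neg at hsmall
        have hr2 : 0 < r / 2 := by linarith
        have hr2R : R ≤ r / 2 := by linarith
        have hr2le : r / 2 ≤ 2 ^ n * (2 * R) := by
          rw [pow_succ] at h2; linarith
        have hvr2 := ih (r / 2) hr2 hr2le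
        have hrec' := hrec (r / 2) hr2
        rw [mul_div_cancel₀ r two_ne_zero] at hrec'
        have hη : C * η (r / 2) ≤ 1 / 2 := hηR _ hr2R
        have hvnn : 0 ≤ v (r / 2) := hv0 _ hr2
        have hηnn : 0 ≤ η (r / 2) := hη0 _ hr2
        calc v r ≤ C * (1 + η (r / 2) * v (r / 2)) := hrec'
          _ = C + (C * η (r / 2)) * v (r / 2) := by ring
          _ ≤ C + (1 / 2) * (2 * C + M0) := by
              have := mul_le_mul hη hvr2 hvnn (by norm_num)
              linarith
          _ ≤ 2 * C + M0 := by linarith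
  refine ⟨2 * C + M0, fun r hr => ?_⟩
  obtain ⟨n, hn⟩ := pow_unbounded_of_one_lt (r / (2 * R)) (one_lt_two (α := ℝ))
  refine key n r hr ?_
  have : r / (2 * R) ≤ 2 ^ n := hn.le
  calc r = (r / (2 * R)) * (2 * R) := by field_simp
    _ ≤ 2 ^ n * (2 * R) := by
        apply mul_le_mul_of_nonneg_right this (by linarith)
end

section
/- Let b ∈ ℝ, let Γ := {(t, 0) : t ≥ 0} ⊂ ℝ², and for x ∈ ℝ² \ Γ let arg(x) ∈ (0, 2π) be the unique angle with x = |x| (cos(arg x), sin(arg x)). Define ξ : ℝ² \ Γ → ℝ² by ξ(x) := ( x₁ − (b/(2π)) arg(x), x₂ ). Then there exists R₀ > 0 (depending only on b) such that for every R ≥ R₀ the map ξ is injective on the set {x ∈ ℝ² \ Γ : |x| ≥ R/4}. -/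
/-!
Two points with the same image under `ξ` have the same height `x₂`, hence lie in one closed
half-plane and their angles differ by some `δ` with `|δ| ≤ π`; their horizontal distance is
`|b| |δ| / 2π`. On the other hand, by the law of cosines and `1 - cos δ ≥ 2 δ² / π²`, two points of
modulus at least `R / 4` whose angles differ by `δ` are at distance at least `R |δ| / 2π`. For
`R > |b|` this forces `δ = 0`, and then the points coincide.
-/

/-- The Euclidean norm on `ℝ²` (written as `ℝ × ℝ`). -/
noncomputable def nrm2 (x : ℝ × ℝ) : ℝ := Real.sqrt (x.1 ^ 2 + x.2 ^ 2)

/-- The branch cut `Γ = {(t, 0) : t ≥ 0}`. -/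
def branchCut : Set (ℝ × ℝ) := {x | 0 ≤ x.1 ∧ x.2 = 0}

open Real

lemma polar_law_cos (ρ₁ ρ₂ a₁ a₂ : ℝ) :
    (ρ₁ * cos a₁ - ρ₂ * cos a₂) ^ 2 + (ρ₁ * sin a₁ - ρ₂ * sin a₂) ^ 2
      = (ρ₁ - ρ₂) ^ 2 + 2 * ρ₁ * ρ₂ * (1 - cos (a₁ - a₂)) := by
  rw [cos_sub]
  linear_combination ρ₁ ^ 2 * sin_sq_add_cos_sq a₁ + ρ₂ ^ 2 * sin_sq_add_cos_sq a₂

lemma polar_chord_lower_bound {r ρ₁ ρ₂ a₁ a₂ : ℝ} (hr : 0 ≤ r) (hρ₁ : r ≤ ρ₁) (hρ₂ : r ≤ ρ₂)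
    (ha : |a₁ - a₂| ≤ π) :
    (2 * r * (a₁ - a₂) / π) ^ 2
      ≤ (ρ₁ * cos a₁ - ρ₂ * cos a₂) ^ 2 + (ρ₁ * sin a₁ - ρ₂ * sin a₂) ^ 2 := by
  have hcos := cos_le_one_sub_mul_cos_sq ha
  have hrr : r * r ≤ ρ₁ * ρ₂ := mul_le_mul hρ₁ hρ₂ hr (hr.trans hρ₁)
  have hρρ : 0 ≤ ρ₁ * ρ₂ := (mul_self_nonneg r).trans hrr
  rw [polar_law_cos]
  calc (2 * r * (a₁ - a₂) / π) ^ 2 = 2 * (r * r) * (2 / π ^ 2 * (a₁ - a₂) ^ 2) := by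
        field_simp
    _ ≤ 2 * (ρ₁ * ρ₂) * (1 - cos (a₁ - a₂)) :=
        mul_le_mul (by linarith) (by linarith) (by positivity) (by linarith)
    _ ≤ (ρ₁ - ρ₂) ^ 2 + 2 * ρ₁ * ρ₂ * (1 - cos (a₁ - a₂)) := by nlinarith [sq_nonneg (ρ₁ - ρ₂)]

lemma sin_pos_and_sin_neg_of_pi_lt_sub {a₁ a₂ : ℝ} (ha₁ : 0 < a₁) (ha₂ : a₂ < 2 * π)
    (h : π < a₂ - a₁) : 0 < sin a₁ ∧ sin a₂ < 0 := by
  refine ⟨sin_pos_of_pos_of_lt_pi ha₁ (by linarith [pi_pos]), ?_⟩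
  have := sin_pos_of_pos_of_lt_pi (x := a₂ - π) (by linarith) (by linarith)
  rw [sin_sub_pi] at this
  linarith

lemma abs_sub_le_pi_of_mul_sin_eq {ρ₁ ρ₂ a₁ a₂ : ℝ} (hρ₁ : 0 < ρ₁) (hρ₂ : 0 < ρ₂)
    (ha₁ : a₁ ∈ Set.Ioo 0 (2 * π)) (ha₂ : a₂ ∈ Set.Ioo 0 (2 * π))
    (h : ρ₁ * sin a₁ = ρ₂ * sin a₂) : |a₁ - a₂| ≤ π := by
  rw [abs_le]
  constructor
  · by_contra! hlt
    obtain ⟨h₁, h₂⟩ := sin_pos_and_sin_neg_of_pi_lt_sub ha₁.1 ha₂.2 (by linarith)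
    nlinarith [mul_pos hρ₁ h₁, mul_pos hρ₂ (neg_pos.2 h₂)]
  · by_contra! hlt
    obtain ⟨h₁, h₂⟩ := sin_pos_and_sin_neg_of_pi_lt_sub ha₂.1 ha₁.2 hlt
    nlinarith [mul_pos hρ₂ h₁, mul_pos hρ₁ (neg_pos.2 h₂)]

lemma eq_zero_of_sq_mul_le_sq_mul {a c t : ℝ} (hac : |a| < c) (h : (c * t) ^ 2 ≤ (a * t) ^ 2) :
    t = 0 := by
  have hsq : a ^ 2 < c ^ 2 := sq_lt_sq' (by linarith [neg_abs_le a]) (by linarith [le_abs_self a])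
  have ht : t ^ 2 = 0 := by nlinarith [sq_nonneg t]
  exact pow_eq_zero_iff two_ne_zero |>.1 ht

/-- **Injectivity of the dislocation coordinate change** (Lemma B.2(a)): with
`arg(x) ∈ (0, 2π)` the unique angle of `x ∉ Γ` and `ξ(x) = (x₁ − (b/2π) arg x, x₂)`,
there is `R₀ > 0` depending only on `b` such that for all `R ≥ R₀` the map `ξ` is injective
on `{x ∉ Γ : |x| ≥ R/4}`. -/
theorem stmt14 (b : ℝ) :
    ∃ R₀ : ℝ, 0 < R₀ ∧
      ∀ A : ℝ × ℝ → ℝ,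
        (∀ x : ℝ × ℝ, x ∉ branchCut →
          A x ∈ Set.Ioo 0 (2 * Real.pi) ∧
          x.1 = nrm2 x * Real.cos (A x) ∧ x.2 = nrm2 x * Real.sin (A x)) →
        ∀ R : ℝ, R₀ ≤ R →
          Set.InjOn (fun x : ℝ × ℝ => (x.1 - b / (2 * Real.pi) * A x, x.2))
            {x : ℝ × ℝ | x ∉ branchCut ∧ R / 4 ≤ nrm2 x} := by
  refine ⟨|b| + 1, by positivity, fun A hA R hR x ⟨hxΓ, hxR⟩ y ⟨hyΓ, hyR⟩ hxy => ?_⟩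
  obtain ⟨hAx, hx₁, hx₂⟩ := hA x hxΓ
  obtain ⟨hAy, hy₁, hy₂⟩ := hA y hyΓ
  obtain ⟨h₁, h₂⟩ := Prod.mk.inj hxy
  have hR4 : 0 < R / 4 := by linarith [abs_nonneg b]
  have hangle : |A x - A y| ≤ π :=
    abs_sub_le_pi_of_mul_sin_eq (hR4.trans_le hxR) (hR4.trans_le hyR) hAx hAy
      (by rw [← hx₂, ← hy₂, h₂])
  have hchord := polar_chord_lower_bound hR4.le hxR hyR hangle
  rw [← hx₁, ← hy₁, ← hx₂, ← hy₂, h₂, sub_self] at hchord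
  have hshift : x.1 - y.1 = b / (2 * π) * (A x - A y) := by linear_combination h₁
  have hδ : (R * ((A x - A y) / (2 * π))) ^ 2 ≤ (b * ((A x - A y) / (2 * π))) ^ 2 := by
    convert hchord using 1 <;> [ring; (rw [hshift]; ring)]
  have hA_eq : A x = A y := by
    have := eq_zero_of_sq_mul_le_sq_mul (by linarith) hδ
    rw [div_eq_zero_iff, sub_eq_zero] at this
    exact this.resolve_right (by positivity)
  exact Prod.ext (by linear_combination h₁ + b / (2 * π) * hA_eq) h₂
end

section
/- Let b ∈ ℝ, let Γ := {(t, 0) : t ≥ 0} ⊂ ℝ², and for x ∈ ℝ² \ Γ let arg(x) ∈ (0, 2π) be the unique angle with x = |x| (cos(arg x), sin(arg x)). Define ξ : ℝ² \ Γ → ℝ² by ξ(x) := ( x₁ − (b/(2π)) arg(x), x₂ ). Then there exists R₀ > 0 (depending only on b) such that for every R ≥ R₀, every point y ∈ ℝ² \ Γ with |y| ≥ R/2 lies in the image ξ( {x ∈ ℝ² \ Γ : |x| ≥ R/4} ). -/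
/-!
Off `Γ` the angle `A` is forced to be `π + arg(-x)`, which is continuous there. Since
`|b/(2π) · A| ≤ |b|`, the intermediate value theorem applied to `t ↦ t - b/(2π) · A(t, y₂)` on
`[y₁ - |b|, y₁ + |b|]` produces `x = (t, y₂)` with `ξ(x) = y`. This segment misses `Γ` as soon as
`|y| > |b|`, and `|x| ≥ |y| - |b| ≥ R/4` once `R ≥ 4|b|`.
-/

open Complex Set

lemma nrm2_eq_norm (x : ℝ × ℝ) : nrm2 x = ‖equivRealProd.symm x‖ := by
  simp [nrm2, norm_eq_sqrt_sq_add_sq]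

lemma neg_mem_slitPlane_iff {x : ℝ × ℝ} : -equivRealProd.symm x ∈ slitPlane ↔ x ∉ branchCut := by
  simp [mem_slitPlane_iff, branchCut, ← not_le, imp_iff_not_or]

lemma nrm2_pos {x : ℝ × ℝ} (hx : x ∉ branchCut) : 0 < nrm2 x := by
  rw [nrm2_eq_norm, norm_pos_iff, ← neg_ne_zero]
  exact slitPlane_ne_zero (neg_mem_slitPlane_iff.2 hx)

/-- Negating `x` moves the cut of the principal argument onto `Γ`. -/
noncomputable def slitAngle (x : ℝ × ℝ) : ℝ := arg (-equivRealProd.symm x) + Real.pi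

lemma continuousAt_slitAngle {x : ℝ × ℝ} (hx : x ∉ branchCut) : ContinuousAt slitAngle x := by
  have hneg : Continuous fun z : ℝ × ℝ => -equivRealProd.symm z :=
    equivRealProdCLM.symm.continuous.neg
  exact ((continuousAt_arg (neg_mem_slitPlane_iff.2 hx)).comp
    (f := fun z => -equivRealProd.symm z) hneg.continuousAt).add continuousAt_const

lemma eq_slitAngle_of_polar {x : ℝ × ℝ} {θ : ℝ} (hx : x ∉ branchCut)
    (hθ : θ ∈ Ioo 0 (2 * Real.pi)) (hcos : x.1 = nrm2 x * Real.cos θ)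
    (hsin : x.2 = nrm2 x * Real.sin θ) : θ = slitAngle x := by
  have hpolar : -equivRealProd.symm x =
      nrm2 x * (cos (θ - Real.pi : ℝ) + sin (θ - Real.pi : ℝ) * I) := by
    apply Complex.ext <;>
      simp [-ofReal_sub, ← ofReal_cos, ← ofReal_sin, Real.cos_sub_pi, Real.sin_sub_pi, ← hcos,
        ← hsin]
  have harg : arg (-equivRealProd.symm x) = θ - Real.pi := by
    rw [hpolar]
    exact arg_mul_cos_add_sin_mul_I (θ := θ - Real.pi) (nrm2_pos hx)
      ⟨by linarith [hθ.1], by linarith [hθ.2]⟩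
  rw [slitAngle, harg, sub_add_cancel]

lemma nrm2_le_nrm2_add_abs_sub (y : ℝ × ℝ) (t : ℝ) : nrm2 y ≤ nrm2 (t, y.2) + |y.1 - t| := by
  have hsplit : equivRealProd.symm y = equivRealProd.symm (t, y.2) + ((y.1 - t : ℝ) : ℂ) := by
    apply Complex.ext <;> simp
  rw [nrm2_eq_norm, nrm2_eq_norm, hsplit]
  exact (norm_add_le _ _).trans_eq (by rw [norm_real, Real.norm_eq_abs])

lemma mk_notMem_branchCut {y : ℝ × ℝ} {t d : ℝ} (hy : y ∉ branchCut) (hyd : d < nrm2 y)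
    (ht : |y.1 - t| ≤ d) : (t, y.2) ∉ branchCut := by
  rintro ⟨ht0, hy2⟩
  have hy1 : y.1 < 0 := lt_of_not_ge fun h => hy ⟨h, hy2⟩
  have hnrm : nrm2 y = -y.1 := by
    rw [nrm2, hy2, zero_pow two_ne_zero, add_zero, Real.sqrt_sq_eq_abs, abs_of_neg hy1]
  linarith [neg_abs_le (y.1 - t)]

lemma abs_div_two_pi_mul_le (b : ℝ) {θ : ℝ} (hθ : θ ∈ Icc 0 (2 * Real.pi)) :
    |b / (2 * Real.pi) * θ| ≤ |b| := by
  have h2pi : 0 < 2 * Real.pi := by positivity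
  rw [abs_mul, abs_div, abs_of_pos h2pi, abs_of_nonneg hθ.1, div_mul_eq_mul_div,
    div_le_iff₀ h2pi]
  exact mul_le_mul_of_nonneg_left hθ.2 (abs_nonneg b)

lemma exists_sub_eq_of_abs_le {f : ℝ → ℝ} {a M : ℝ} (hM : 0 ≤ M)
    (hf : ContinuousOn f (Icc (a - M) (a + M))) (hfM : ∀ t ∈ Icc (a - M) (a + M), |f t| ≤ M) :
    ∃ t ∈ Icc (a - M) (a + M), t - f t = a := by
  have hle : a - M ≤ a + M := by linarith
  have hleft := hfM (a - M) (left_mem_Icc.2 hle)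
  have hright := hfM (a + M) (right_mem_Icc.2 hle)
  exact intermediate_value_Icc (f := fun t => t - f t) hle (continuousOn_id.sub hf)
    (show a ∈ Icc (a - M - f (a - M)) (a + M - f (a + M)) from
      ⟨by linarith [neg_abs_le (f (a - M))], by linarith [le_abs_self (f (a + M))]⟩)

/-- **Range of the dislocation coordinate change** (Lemma B.2(b)): with
`arg(x) ∈ (0, 2π)` the unique angle of `x ∉ Γ` and `ξ(x) = (x₁ − (b/2π) arg x, x₂)`,
there is `R₀ > 0` depending only on `b` such that for all `R ≥ R₀`, every `y ∉ Γ` with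
`|y| ≥ R/2` lies in the image `ξ({x ∉ Γ : |x| ≥ R/4})`. -/
theorem stmt15 (b : ℝ) :
    ∃ R₀ : ℝ, 0 < R₀ ∧
      ∀ A : ℝ × ℝ → ℝ,
        (∀ x : ℝ × ℝ, x ∉ branchCut →
          A x ∈ Set.Ioo 0 (2 * Real.pi) ∧
          x.1 = nrm2 x * Real.cos (A x) ∧ x.2 = nrm2 x * Real.sin (A x)) →
        ∀ R : ℝ, R₀ ≤ R →
          ∀ y : ℝ × ℝ, y ∉ branchCut → R / 2 ≤ nrm2 y →
            ∃ x : ℝ × ℝ, x ∉ branchCut ∧ R / 4 ≤ nrm2 x ∧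
              (x.1 - b / (2 * Real.pi) * A x, x.2) = y := by
  refine ⟨4 * |b| + 1, by positivity, fun A hA R hR y hy hyR => ?_⟩
  have hseg : ∀ t ∈ Icc (y.1 - |b|) (y.1 + |b|), (t, y.2) ∉ branchCut := fun t ht =>
    mk_notMem_branchCut hy (by linarith [abs_nonneg b]) (mem_Icc_iff_abs_le.2 ht)
  have hA_eq : ∀ t ∈ Icc (y.1 - |b|) (y.1 + |b|), A (t, y.2) = slitAngle (t, y.2) := fun t ht =>
    have h := hA _ (hseg t ht)
    eq_slitAngle_of_polar (hseg t ht) h.1 h.2.1 h.2.2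
  have hcont :
      ContinuousOn (fun t => b / (2 * Real.pi) * A (t, y.2)) (Icc (y.1 - |b|) (y.1 + |b|)) := by
    refine ContinuousOn.congr (fun t ht => ?_) fun t ht => by rw [hA_eq t ht]
    exact (((continuousAt_slitAngle (hseg t ht)).comp (f := fun s => (s, y.2))
      (continuous_id.prodMk continuous_const).continuousAt).const_mul _).continuousWithinAt
  obtain ⟨t, ht, hty⟩ := exists_sub_eq_of_abs_le (abs_nonneg b) hcont fun t ht =>
    abs_div_two_pi_mul_le b (Ioo_subset_Icc_self (hA _ (hseg t ht)).1)
  refine ⟨(t, y.2), hseg t ht, ?_, Prod.ext hty rfl⟩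
  linarith [nrm2_le_nrm2_add_abs_sub y t, mem_Icc_iff_abs_le.2 ht]
end
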